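/- Let M be a complete pointed metric space and f ∈ Lip₀(M), and suppose the induced linear functional T_f on the Lipschitz-free space F(M) attains its norm at an element m ∈ F(M) with ‖m‖ = 1 which is a convex integral of molecules, i.e., m = Φ*μ for a positive measure μ on the Stone–Čech compactification β(M̃) of the set M̃ of pairs of distinct points, concentrated on M̃, with ‖μ‖ = ‖m‖ = 1, where Φ : Lip₀(M) → C(βM̃) is the de Leeuw transform (Φf)(p,q) = (f(q)-f(p))/d(p,q). Then f strongly attains its norm: |f(q)-f(p)|/d(p,q) = ‖f‖ for some pair of distinct points (p,q). -/

import Mathlib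

open Filter Metric MeasureTheory

noncomputable def lipNorm {M : Type*} [MetricSpace M] (f : M → ℝ) : ℝ :=
  sSup {r : ℝ | ∃ p q : M, p ≠ q ∧ r = |f q - f p| / dist p q}

noncomputable def pnormAt {M : Type*} [MetricSpace M] (f : M → ℝ) (p : M) : ℝ :=
  sSup {r : ℝ | ∃ q : M, q ≠ p ∧ r = |f q - f p| / dist p q}

/-- `f` strongly attains its (Lipschitz) norm. -/
def StronglyAttains {M : Type*} [MetricSpace M] (f : M → ℝ) : Prop :=
  ∃ p q : M, p ≠ q ∧ |f q - f p| / dist p q = lipNorm f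

/-- `f` attains its pointwise norm. -/
def PointwiseAttains {M : Type*} [MetricSpace M] (f : M → ℝ) : Prop :=
  ∃ p : M, pnormAt f p = lipNorm f

/-! The de Leeuw transform `Φf` is bounded by `‖f‖` in absolute value, so if a probability measure
integrates it to `±‖f‖`, then `‖f‖ - |Φf|` is a nonnegative function with integral `0`; it
vanishes almost everywhere, hence at some pair `(p, q)`. -/

theorem exists_abs_eq_of_abs_integral_eq {α : Type*} [MeasurableSpace α] {μ : Measure α}
    [IsProbabilityMeasure μ] {g : α → ℝ} {c : ℝ} (hg : ∀ x, |g x| ≤ c)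
    (hint : |∫ x, g x ∂μ| = c) : ∃ x, |g x| = c := by
  have hgap : ∀ x, 0 ≤ c - |g x| := fun x => sub_nonneg.2 (hg x)
  by_cases hi : Integrable g μ
  · have hgap_int : Integrable (fun x => c - |g x|) μ := (integrable_const c).sub hi.abs
    have hgap_zero : ∫ x, (c - |g x|) ∂μ = 0 := by
      refine le_antisymm ?_ (integral_nonneg hgap)
      rw [integral_sub (integrable_const c) hi.abs, integral_const, probReal_univ, one_smul]
      linarith [abs_integral_le_integral_abs (f := g) (μ := μ)]
    obtain ⟨x, hx⟩ := ((integral_eq_zero_iff_of_nonneg hgap hgap_int).1 hgap_zero).exists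
    exact ⟨x, by simpa [sub_eq_zero, eq_comm] using hx⟩
  · -- the Bochner integral of a non-integrable function is `0`, so `c = 0` here
    rw [integral_undef hi, abs_zero] at hint
    subst hint
    obtain ⟨x⟩ := nonempty_of_isProbabilityMeasure μ
    exact ⟨x, le_antisymm (hg x) (abs_nonneg _)⟩

theorem abs_sub_div_dist_le_lipNorm {M : Type*} [MetricSpace M] {K : NNReal} {f : M → ℝ}
    (hf : LipschitzWith K f) {p q : M} (hpq : p ≠ q) :
    |f q - f p| / dist p q ≤ lipNorm f := by
  refine le_csSup ⟨K, ?_⟩ ⟨p, q, hpq, rfl⟩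
  rintro r ⟨p', q', hpq', rfl⟩
  rw [div_le_iff₀ (dist_pos.2 hpq'), dist_comm p' q', ← Real.dist_eq]
  exact hf.dist_le_mul q' p'

theorem stmt13_general {M : Type*} [MetricSpace M]
    [MeasurableSpace M]
    (f : M → ℝ) (hlip : ∃ K, LipschitzWith K f)
    (μ : Measure {x : M × M // x.1 ≠ x.2}) (hprob : IsProbabilityMeasure μ)
    (hatt : |∫ x : {x : M × M // x.1 ≠ x.2},
        (f x.val.2 - f x.val.1) / dist x.val.1 x.val.2 ∂μ| = lipNorm f) :
    StronglyAttains f := by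
  obtain ⟨K, hK⟩ := hlip
  have hbound : ∀ x : {x : M × M // x.1 ≠ x.2},
      |(f x.val.2 - f x.val.1) / dist x.val.1 x.val.2| ≤ lipNorm f := fun x => by
    simpa only [abs_div, abs_dist] using abs_sub_div_dist_le_lipNorm hK x.prop
  obtain ⟨x, hx⟩ := exists_abs_eq_of_abs_integral_eq hbound hatt
  exact ⟨x.val.1, x.val.2, x.prop, by rwa [abs_div, abs_dist] at hx⟩

/-- if f ∈ Lip₀(M) (M complete) and T_f attains its norm at a norm-one
convex integral of molecules — i.e. the pairing ∫ S(f,p,q) dμ over the set M̃ of pairs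
of distinct points, against a probability measure μ concentrated on M̃, has absolute
value ‖f‖ — then f strongly attains its norm. -/
theorem stmt13 {M : Type*} [MetricSpace M] [CompleteSpace M]
    [MeasurableSpace M] [BorelSpace M] (z : M)
    (f : M → ℝ) (h0 : f z = 0) (hlip : ∃ K, LipschitzWith K f)
    (μ : Measure {x : M × M // x.1 ≠ x.2}) (hprob : IsProbabilityMeasure μ)
    (hatt : |∫ x : {x : M × M // x.1 ≠ x.2},
        (f x.val.2 - f x.val.1) / dist x.val.1 x.val.2 ∂μ| = lipNorm f) :
    StronglyAttains f :=
  stmt13_general f hlip μ hprob hatt
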